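/- (Parseval's relation in general dimension) Let f, g : ℝ → ℂ be Schwartz functions, let d be a positive real number and c ∈ (0,d). Then ∫₀^∞ ω^{d−1}·f(ω)·g(ω) dω = (1/(2π)) ∫_ℝ M(f)(d−c−iλ)·M(g)(c+iλ) dλ, where M(h)(s) = ∫₀^∞ h(ω) ω^{s−1} dω, and all integrals converge absolutely. -/

import Mathlib

/-!
Under `t = exp (-u)` the Mellin transform of `h` on the line `Re s = σ` becomes the Fourier
transform of `u ↦ exp (-σ u) h (exp (-u))`. For a Schwartz `h` and `σ > 0` this function and its
first two derivatives are integrable, so the Mellin transform is integrable along the line and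
Mellin inversion holds. Writing `M g (c + iλ)` as an integral over `ω` and exchanging the two
integrals, inversion turns `∫ M f (d - c - iλ) ω ^ (iλ) dλ` into `2π ω ^ (d - c) f ω`.
-/

open MeasureTheory Complex Set Real Filter Asymptotics Topology
open scoped FourierTransform

variable {E : Type*} [NormedAddCommGroup E] [NormedSpace ℂ E]

/-- Two integrable derivatives make `𝓕 f` decay like `x⁻²`. -/
theorem Real.integrable_fourier_of_integrable_deriv_deriv {f : ℝ → E} (hf : Integrable f)
    (hf_diff : Differentiable ℝ f) (hf' : Integrable (deriv f))
    (hf'_diff : Differentiable ℝ (deriv f)) (hf'' : Integrable (deriv (deriv f))) :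
    Integrable (𝓕 f) := by
  set A : ℝ := ∫ u, ‖f u‖
  set B : ℝ := (∫ u, ‖deriv (deriv f) u‖) / (4 * π ^ 2)
  have hsymbol : ∀ x, 𝓕 (deriv (deriv f)) x = (2 * π * I * x) • (2 * π * I * x) • 𝓕 f x := by
    intro x
    rw [Real.fourier_deriv hf' hf'_diff hf'', Real.fourier_deriv hf hf_diff hf']
  have hbound : ∀ x : ℝ, ‖𝓕 f x‖ ≤ (A + B) * (1 + x ^ 2)⁻¹ := by
    intro x
    have hA : ‖𝓕 f x‖ ≤ A := VectorFourier.norm_fourierIntegral_le_integral_norm _ _ _ f x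
    have hB : 4 * π ^ 2 * (x ^ 2 * ‖𝓕 f x‖) ≤ ∫ u, ‖deriv (deriv f) u‖ := by
      have h : ‖𝓕 (deriv (deriv f)) x‖ ≤ ∫ u, ‖deriv (deriv f) u‖ :=
        VectorFourier.norm_fourierIntegral_le_integral_norm _ _ _ _ x
      refine le_of_eq_of_le ?_ h
      rw [hsymbol, norm_smul, norm_smul]
      simp only [norm_mul, Complex.norm_real, Complex.norm_I, Complex.norm_ofNat, mul_one,
        Real.norm_eq_abs, abs_of_pos Real.pi_pos]
      rw [← sq_abs x]
      ring
    have hB' : x ^ 2 * ‖𝓕 f x‖ ≤ B := by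
      rw [le_div_iff₀ (by positivity)]; linarith
    rw [← div_eq_mul_inv, le_div_iff₀ (by positivity)]
    nlinarith [norm_nonneg (𝓕 f x)]
  refine (integrable_inv_one_add_sq.const_mul (A + B)).mono' ?_ (.of_forall hbound)
  exact (VectorFourier.fourierIntegral_continuous Real.continuous_fourierChar
    (by exact continuous_inner) hf).aestronglyMeasurable

noncomputable def mellinProfile (σ : ℝ) (h : ℝ → E) (u : ℝ) : E :=
  Real.exp (-σ * u) • h (Real.exp (-u))

theorem mellin_eq_fourier_mellinProfile (h : ℝ → E) (σ y : ℝ) :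
    mellin h (σ + y * I) = 𝓕 (mellinProfile σ h) (y / (2 * π)) := by
  have hre : (σ + y * I : ℂ).re = σ := by simp
  have him : (σ + y * I : ℂ).im = y := by simp
  rw [mellin_eq_fourier, hre, him]
  rfl

theorem MellinConvergent.integrable_mellinProfile {h : ℝ → E} {σ : ℝ}
    (hh : MellinConvergent h σ) : Integrable (mellinProfile σ h) := by
  have hexp : Real.exp '' univ = Ioi 0 := by rw [image_univ, Real.range_exp]
  rw [MellinConvergent, ← hexp, integrableOn_image_iff_integrableOn_abs_deriv_smul
    MeasurableSet.univ (fun x _ ↦ (Real.hasDerivAt_exp x).hasDerivWithinAt)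
    Real.exp_injective.injOn, integrableOn_univ] at hh
  have hneg : Integrable fun u ↦ mellinProfile σ h (-u) := by
    refine hh.congr (.of_forall fun u ↦ ?_)
    dsimp only
    rw [abs_of_pos (Real.exp_pos u), ← ofReal_one, ← ofReal_sub,
      ← ofReal_cpow (Real.exp_pos u).le, ← Real.exp_mul, Complex.coe_smul, smul_smul,
      ← Real.exp_add, mellinProfile, neg_neg]
    ring_nf
  simpa using hneg.comp_neg

theorem hasDerivAt_mellinProfile {h : ℝ → E} (σ u : ℝ)
    (hh : DifferentiableAt ℝ h (Real.exp (-u))) :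
    HasDerivAt (mellinProfile σ h)
      (-σ • mellinProfile σ h u - mellinProfile (σ + 1) (deriv h) u) u := by
  have hweight : HasDerivAt (fun u ↦ Real.exp (-σ * u)) (Real.exp (-σ * u) * -σ) u :=
    ((hasDerivAt_id u).const_mul (-σ)).exp.congr_deriv (by simp)
  have hinner : HasDerivAt (fun u ↦ h (Real.exp (-u)))
      (-Real.exp (-u) • deriv h (Real.exp (-u))) u :=
    hh.hasDerivAt.scomp u ((hasDerivAt_neg u).exp.congr_deriv (by simp))
  refine (hweight.fun_smul hinner).congr_deriv ?_
  have hexp : Real.exp (-σ * u) * -Real.exp (-u) = -Real.exp (-(σ + 1) * u) := by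
    rw [mul_neg, ← Real.exp_add]; ring_nf
  rw [smul_smul, hexp, mul_comm (Real.exp (-σ * u)), mellinProfile, mellinProfile, smul_smul,
    neg_smul]
  abel

namespace SchwartzMap

variable (h : 𝓢(ℝ, E))

theorem mellinConvergent {s : ℂ} (hs : 0 < s.re) : MellinConvergent h s := by
  have htop : (h : ℝ → E) =O[atTop] (· ^ (-(s.re + 1))) := by
    refine ((h.isBigO_cocompact_rpow (-(s.re + 1))).mono ?_).congr' .rfl ?_
    · rw [cocompact_eq_atBot_atTop]; exact le_sup_right
    · filter_upwards [eventually_gt_atTop 0] with x hx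
      rw [Real.norm_of_nonneg hx.le]
  have hzero : (h : ℝ → E) =O[𝓝[>] 0] (· ^ (-0 : ℝ)) := by
    simpa using ((h.continuous.tendsto 0).mono_left nhdsWithin_le_nhds).isBigO_one ℝ
  exact mellinConvergent_of_isBigO_rpow (h.continuous.locallyIntegrable.locallyIntegrableOn _)
    htop (lt_add_one _) hzero (by simpa using hs)

theorem integrable_mellinProfile {σ : ℝ} (hσ : 0 < σ) : Integrable (mellinProfile σ h) :=
  (h.mellinConvergent (by simpa using hσ)).integrable_mellinProfile

theorem deriv_mellinProfile (σ : ℝ) :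
    deriv (mellinProfile σ h) =
      -σ • mellinProfile σ h - mellinProfile (σ + 1) (derivCLM ℝ E h) := by
  ext u
  rw [(hasDerivAt_mellinProfile σ u h.differentiableAt).deriv]
  rfl

theorem differentiable_mellinProfile (σ : ℝ) : Differentiable ℝ (mellinProfile σ h) :=
  fun u ↦ (hasDerivAt_mellinProfile σ u h.differentiableAt).differentiableAt

theorem integrable_deriv_mellinProfile {σ : ℝ} (hσ : 0 < σ) :
    Integrable (deriv (mellinProfile σ h)) := by
  rw [deriv_mellinProfile]
  exact ((h.integrable_mellinProfile hσ).smul _).sub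
    ((derivCLM ℝ E h).integrable_mellinProfile (by linarith))

theorem differentiable_deriv_mellinProfile (σ : ℝ) :
    Differentiable ℝ (deriv (mellinProfile σ h)) := by
  rw [deriv_mellinProfile]
  exact ((h.differentiable_mellinProfile σ).const_smul _).sub
    ((derivCLM ℝ E h).differentiable_mellinProfile _)

theorem integrable_deriv_deriv_mellinProfile {σ : ℝ} (hσ : 0 < σ) :
    Integrable (deriv (deriv (mellinProfile σ h))) := by
  have hderiv : deriv (deriv (mellinProfile σ h)) =
      -σ • deriv (mellinProfile σ h) - deriv (mellinProfile (σ + 1) (derivCLM ℝ E h)) := by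
    ext u
    conv_lhs => rw [h.deriv_mellinProfile]
    rw [deriv_sub ((h.differentiable_mellinProfile σ).const_smul _ u)
      ((derivCLM ℝ E h).differentiable_mellinProfile _ u),
      deriv_const_smul _ (h.differentiable_mellinProfile σ u)]
    rfl
  rw [hderiv]
  exact ((h.integrable_deriv_mellinProfile hσ).smul _).sub
    ((derivCLM ℝ E h).integrable_deriv_mellinProfile (by linarith))

theorem integrable_fourier_mellinProfile {σ : ℝ} (hσ : 0 < σ) :
    Integrable (𝓕 (mellinProfile σ h)) :=
  Real.integrable_fourier_of_integrable_deriv_deriv (h.integrable_mellinProfile hσ)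
    (h.differentiable_mellinProfile σ) (h.integrable_deriv_mellinProfile hσ)
    (h.differentiable_deriv_mellinProfile σ) (h.integrable_deriv_deriv_mellinProfile hσ)

theorem verticalIntegrable_mellin {σ : ℝ} (hσ : 0 < σ) : VerticalIntegrable (mellin h) σ := by
  simp_rw [VerticalIntegrable, mellin_eq_fourier_mellinProfile]
  exact (h.integrable_fourier_mellinProfile hσ).comp_div (by positivity)

end SchwartzMap

theorem integral_cpow_smul_mellin_eq {f : ℝ → E} [CompleteSpace E] {σ ω : ℝ}
    (hf : MellinConvergent f σ) (hFf : VerticalIntegrable (mellin f) σ) (hω : 0 < ω)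
    (hfω : ContinuousAt f ω) :
    ∫ l : ℝ, (ω : ℂ) ^ (l * I) • mellin f (σ - l * I) = (2 * π * (ω : ℂ) ^ (σ : ℂ)) • f ω := by
  have hω' : (ω : ℂ) ≠ 0 := by exact_mod_cast hω.ne'
  have hterm : ∀ l : ℝ, (ω : ℂ) ^ (l * I) • mellin f (σ - l * I) =
      (ω : ℂ) ^ (σ : ℂ) • ((ω : ℂ) ^ (-(σ + (-l : ℝ) * I)) • mellin f (σ + (-l : ℝ) * I)) := by
    intro l
    rw [smul_smul, ← cpow_add _ _ hω']
    push_cast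
    ring_nf
  have hinv := mellinInv_mellin_eq σ f hω hf hFf hfω
  rw [mellinInv, ← integral_neg_eq_self] at hinv
  simp_rw [hterm]
  rw [integral_smul, ← hinv, ← Complex.coe_smul, smul_smul]
  congr 1
  push_cast
  field_simp

section Parseval

variable {f g : ℝ → ℂ} {σ c : ℝ}

noncomputable def mellinParsevalKernel (f g : ℝ → ℂ) (σ c l ω : ℝ) : ℂ :=
  mellin f (σ - l * I) * (ω : ℂ) ^ (l * I) * ((ω : ℂ) ^ (c - 1 : ℂ) * g ω)

theorem integrable_mellinParsevalKernel (hFf : VerticalIntegrable (mellin f) σ)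
    (hg : MellinConvergent g c) :
    Integrable (Function.uncurry (mellinParsevalKernel f g σ c))
      (volume.prod (volume.restrict (Ioi 0))) := by
  have hF : Integrable fun l : ℝ ↦ mellin f (σ - l * I) := by
    simpa [sub_eq_add_neg] using hFf.comp_neg
  have hprod := hF.mul_prod hg
  have hphase : Measurable fun p : ℝ × ℝ ↦ (p.2 : ℂ) ^ (p.1 * I) := by fun_prop
  refine hprod.norm.mono' ?_ ?_
  · exact ((hF.aestronglyMeasurable.comp_fst).mul hphase.aestronglyMeasurable).mul
      hg.aestronglyMeasurable.comp_snd
  · filter_upwards [Measure.quasiMeasurePreserving_snd.ae (ae_restrict_mem measurableSet_Ioi)]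
      with p (hp : 0 < p.2)
    simp [Function.uncurry, mellinParsevalKernel, norm_cpow_eq_rpow_re_of_pos hp]

theorem setIntegral_mellinParsevalKernel (l : ℝ) :
    ∫ ω in Ioi 0, mellinParsevalKernel f g σ c l ω =
      mellin f (σ - l * I) * mellin g (c + l * I) := by
  change _ = _ * ∫ ω : ℝ in Ioi 0, (ω : ℂ) ^ ((c : ℂ) + l * I - 1) • g ω
  rw [← integral_const_mul]
  refine setIntegral_congr_fun measurableSet_Ioi fun ω (hω : 0 < ω) ↦ ?_
  have hω' : (ω : ℂ) ≠ 0 := by exact_mod_cast hω.ne'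
  rw [mellinParsevalKernel, smul_eq_mul, mul_assoc, ← mul_assoc ((ω : ℂ) ^ _), ← cpow_add _ _ hω']
  ring_nf

theorem integral_mellinParsevalKernel (hf : MellinConvergent f σ)
    (hFf : VerticalIntegrable (mellin f) σ) {ω : ℝ} (hω : 0 < ω) (hfω : ContinuousAt f ω) :
    ∫ l, mellinParsevalKernel f g σ c l ω =
      2 * π * (((ω ^ (σ + c - 1) : ℝ) : ℂ) * f ω * g ω) := by
  have hω' : (ω : ℂ) ≠ 0 := by exact_mod_cast hω.ne'
  simp_rw [mellinParsevalKernel]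
  rw [integral_mul_const]
  have hinv := integral_cpow_smul_mellin_eq hf hFf hω hfω
  simp only [smul_eq_mul] at hinv
  simp_rw [mul_comm (mellin f _)]
  rw [hinv, ofReal_cpow hω.le]
  push_cast
  rw [show (σ : ℂ) + c - 1 = σ + (c - 1) by ring, cpow_add _ _ hω']
  ring

theorem mellin_parseval (hf : MellinConvergent f σ) (hFf : VerticalIntegrable (mellin f) σ)
    (hfc : ContinuousOn f (Ioi 0)) (hg : MellinConvergent g c) :
    IntegrableOn (fun ω : ℝ ↦ ((ω ^ (σ + c - 1) : ℝ) : ℂ) * f ω * g ω) (Ioi 0) ∧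
      Integrable (fun l : ℝ ↦ mellin f (σ - l * I) * mellin g (c + l * I)) ∧
      ∫ ω in Ioi 0, ((ω ^ (σ + c - 1) : ℝ) : ℂ) * f ω * g ω =
        ((1 / (2 * π) : ℝ) : ℂ) * ∫ l : ℝ, mellin f (σ - l * I) * mellin g (c + l * I) := by
  have hK := integrable_mellinParsevalKernel hFf hg
  have hinner : ∀ ω ∈ Ioi (0 : ℝ), ∫ l, mellinParsevalKernel f g σ c l ω =
      2 * π * (((ω ^ (σ + c - 1) : ℝ) : ℂ) * f ω * g ω) := fun ω hω ↦
    integral_mellinParsevalKernel hf hFf hω (hfc.continuousAt (Ioi_mem_nhds hω))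
  have hπ : (2 * π : ℂ) ≠ 0 := by exact_mod_cast Real.two_pi_pos.ne'
  have hswap : ∫ l : ℝ, mellin f (σ - l * I) * mellin g (c + l * I) =
      2 * π * ∫ ω in Ioi 0, ((ω ^ (σ + c - 1) : ℝ) : ℂ) * f ω * g ω := by
    simp_rw [← setIntegral_mellinParsevalKernel, ← integral_const_mul]
    rw [integral_integral_swap hK]
    exact setIntegral_congr_fun measurableSet_Ioi hinner
  refine ⟨?_, ?_, ?_⟩
  · have hint : IntegrableOn (fun ω ↦ ∫ l, mellinParsevalKernel f g σ c l ω) (Ioi 0) :=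
      hK.integral_prod_right
    refine IntegrableOn.congr_fun (hint.const_mul (2 * π : ℂ)⁻¹) (fun ω hω ↦ ?_)
      measurableSet_Ioi
    rw [hinner ω hω, inv_mul_cancel_left₀ hπ]
  · simpa only [Function.uncurry_apply_pair, setIntegral_mellinParsevalKernel]
      using hK.integral_prod_left
  · rw [hswap]
    push_cast
    field_simp

end Parseval

theorem mellin_parseval_schwartz_general_dim_general (f g : SchwartzMap ℝ ℂ) (d c : ℝ)
    (hc0 : 0 < c) (hcd : c < d) :
    let M : (ℝ → ℂ) → ℂ → ℂ := fun h s => ∫ ω in Ioi (0 : ℝ), h ω * (ω : ℂ) ^ (s - 1)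
    IntegrableOn (fun ω : ℝ => ((ω ^ (d - 1) : ℝ) : ℂ) * f ω * g ω) (Ioi 0) ∧
      (∀ l : ℝ, IntegrableOn
          (fun ω : ℝ => f ω * (ω : ℂ) ^ ((d : ℂ) - c - (l : ℂ) * Complex.I - 1)) (Ioi 0)) ∧
      (∀ l : ℝ, IntegrableOn
          (fun ω : ℝ => g ω * (ω : ℂ) ^ ((c : ℂ) + (l : ℂ) * Complex.I - 1)) (Ioi 0)) ∧
      Integrable
        (fun l : ℝ =>
          M f ((d : ℂ) - c - (l : ℂ) * Complex.I) * M g ((c : ℂ) + (l : ℂ) * Complex.I)) ∧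
      (∫ ω in Ioi (0 : ℝ), ((ω ^ (d - 1) : ℝ) : ℂ) * f ω * g ω) =
        ((1 / (2 * Real.pi) : ℝ) : ℂ) *
          ∫ l : ℝ,
            M f ((d : ℂ) - c - (l : ℂ) * Complex.I) * M g ((c : ℂ) + (l : ℂ) * Complex.I) := by
  intro M
  have hM : ∀ h s, M h s = mellin h s := fun h s ↦
    setIntegral_congr_fun measurableSet_Ioi fun ω _ ↦ mul_comm _ _
  have hline : ∀ l : ℝ, (d : ℂ) - c - l * I = ((d - c : ℝ) : ℂ) - l * I := fun l ↦ by
    push_cast; ring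
  have hdc : 0 < d - c := sub_pos.2 hcd
  have hmellin : ∀ (h : SchwartzMap ℝ ℂ) {s : ℂ}, 0 < s.re →
      IntegrableOn (fun ω : ℝ ↦ h ω * (ω : ℂ) ^ (s - 1)) (Ioi 0) := fun h s hs ↦ by
    simpa only [MellinConvergent, smul_eq_mul, mul_comm] using h.mellinConvergent hs
  obtain ⟨hint, hprod, hparseval⟩ := mellin_parseval (f.mellinConvergent (by simpa using hdc))
    (f.verticalIntegrable_mellin hdc) f.continuous.continuousOn
    (g.mellinConvergent (s := c) (by simpa using hc0))
  simp only [hM, hline, sub_add_cancel] at hint hprod hparseval ⊢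
  exact ⟨hint, fun l ↦ hmellin f (by simpa using hdc), fun l ↦ hmellin g (by simpa using hc0),
    hprod, hparseval⟩

/-- Parseval's relation in general dimension: for Schwartz
functions `f, g`, `d > 0` and `c ∈ (0,d)`,
`∫₀^∞ ω^{d−1}·f(ω)·g(ω) dω = (1/(2π)) ∫_ℝ M(f)(d−c−iλ)·M(g)(c+iλ) dλ`,
all integrals converging absolutely. -/
theorem mellin_parseval_schwartz_general_dim (f g : SchwartzMap ℝ ℂ) (d c : ℝ)
    (hd : 0 < d) (hc0 : 0 < c) (hcd : c < d) :
    let M : (ℝ → ℂ) → ℂ → ℂ := fun h s => ∫ ω in Ioi (0 : ℝ), h ω * (ω : ℂ) ^ (s - 1)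
    IntegrableOn (fun ω : ℝ => ((ω ^ (d - 1) : ℝ) : ℂ) * f ω * g ω) (Ioi 0) ∧
      (∀ l : ℝ, IntegrableOn
          (fun ω : ℝ => f ω * (ω : ℂ) ^ ((d : ℂ) - c - (l : ℂ) * Complex.I - 1)) (Ioi 0)) ∧
      (∀ l : ℝ, IntegrableOn
          (fun ω : ℝ => g ω * (ω : ℂ) ^ ((c : ℂ) + (l : ℂ) * Complex.I - 1)) (Ioi 0)) ∧
      Integrable
        (fun l : ℝ =>
          M f ((d : ℂ) - c - (l : ℂ) * Complex.I) * M g ((c : ℂ) + (l : ℂ) * Complex.I)) ∧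
      (∫ ω in Ioi (0 : ℝ), ((ω ^ (d - 1) : ℝ) : ℂ) * f ω * g ω) =
        ((1 / (2 * Real.pi) : ℝ) : ℂ) *
          ∫ l : ℝ,
            M f ((d : ℂ) - c - (l : ℂ) * Complex.I) * M g ((c : ℂ) + (l : ℂ) * Complex.I) :=
  mellin_parseval_schwartz_general_dim_general f g d c hc0 hcd
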